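/- Let (t_k)_{k ≥ 0} be a sequence in a commutative ring and let α ∈ NC(n). Then Σ_{β ∈ NC(n), β ≫ α} (∏_{U β-special block of α} t_{|U|−1}) · (∏_{V block of α that is not β-special} t_{|V|}) = (∏_{U outer block of α} t_{|U|−1}) · (∏_{V inner block of α} (t_{|V|−1} + t_{|V|})). -/

import Mathlib

open scoped Classical

/-- The minimum of a finset of naturals (`0` if empty). -/
noncomputable def fmin (A : Finset ℕ) : ℕ := sInf (A : Set ℕ)

/-- The maximum of a finset of naturals (`0` if empty). -/
noncomputable def fmax (A : Finset ℕ) : ℕ := sSup (A : Set ℕ)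

/-- `α` is a partition of the finite set `F ⊆ ℕ`. -/
def IsPartitionOfSet (F : Finset ℕ) (α : Finset (Finset ℕ)) : Prop :=
  (∀ V ∈ α, V.Nonempty) ∧ (∀ V ∈ α, V ⊆ F) ∧ (∀ m ∈ F, ∃ V ∈ α, m ∈ V) ∧
    ∀ V ∈ α, ∀ W ∈ α, V ≠ W → V ∩ W = ∅

/-- `α` is a partition of `{1,…,n}`. -/
def IsPartitionOf (n : ℕ) (α : Finset (Finset ℕ)) : Prop :=
  IsPartitionOfSet (Finset.Icc 1 n) α

/-- Two distinct blocks of the family `π` cross: there are `a < b < c < d` with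
`a, c` in one block and `b, d` in a different block. -/
def IsCrossing (π : Finset (Finset ℕ)) : Prop :=
  ∃ A ∈ π, ∃ B ∈ π, A ≠ B ∧
    ∃ a ∈ A, ∃ b ∈ B, ∃ c ∈ A, ∃ d ∈ B, a < b ∧ b < c ∧ c < d

/-- `α ∈ NC(n)`: a non-crossing partition of `{1,…,n}`. -/
def IsNCPartition (n : ℕ) (α : Finset (Finset ℕ)) : Prop :=
  IsPartitionOf n α ∧ ¬ IsCrossing α

/-- Reverse refinement order `α ≤ β`: every block of `α` is contained in a block of `β`
(equivalently, every block of `β` is a union of blocks of `α`). -/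
def Refines (α β : Finset (Finset ℕ)) : Prop := ∀ V ∈ α, ∃ W ∈ β, V ⊆ W

/-- The partial order `α ≪ β`: `α ≤ β` and for every block `W` of `β` there is a block
`V` of `α` containing both `min W` and `max W`. -/
def LL (α β : Finset (Finset ℕ)) : Prop :=
  Refines α β ∧ ∀ W ∈ β, ∃ V ∈ α, fmin W ∈ V ∧ fmax W ∈ V

/-- A block `V` (of `α`) is `β`-special: some block `W` of `β` has the same min and max. -/
def SpecialBlock (β : Finset (Finset ℕ)) (V : Finset ℕ) : Prop :=
  ∃ W ∈ β, fmin V = fmin W ∧ fmax V = fmax W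

/-- `V` is an outer block of `α`: no block of `α` strictly nests around it. -/
def OuterBlock (α : Finset (Finset ℕ)) (V : Finset ℕ) : Prop :=
  ∀ V' ∈ α, ¬ (fmin V' < fmin V ∧ fmax V < fmax V')

/-- `π` is a linked partition of the finite set `F ⊆ ℕ`. -/
def IsLinkedPartitionOfSet (F : Finset ℕ) (π : Finset (Finset ℕ)) : Prop :=
  (∀ A ∈ π, A.Nonempty) ∧ (∀ A ∈ π, A ⊆ F) ∧ (∀ m ∈ F, ∃ A ∈ π, m ∈ A) ∧
    ∀ A ∈ π, ∀ B ∈ π, A ≠ B →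
      A ∩ B = ∅ ∨
        (2 ≤ A.card ∧ 2 ≤ B.card ∧ (A ∩ B).card = 1 ∧ fmin A ≠ fmin B ∧
          ∀ x ∈ A ∩ B, x = fmin A ∨ x = fmin B)

/-- `π ∈ NCL(F)`: a non-crossing linked partition of the finite set `F`. -/
def IsNCLOfSet (F : Finset ℕ) (π : Finset (Finset ℕ)) : Prop :=
  IsLinkedPartitionOfSet F π ∧ ¬ IsCrossing π

/-- `π ∈ NCL(n)`: a non-crossing linked partition of `{1,…,n}`. -/
def IsNCL (n : ℕ) (π : Finset (Finset ℕ)) : Prop :=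
  IsNCLOfSet (Finset.Icc 1 n) π

/-- The number of blocks of `π` containing `m`. -/
noncomputable def coverCount (π : Finset (Finset ℕ)) (m : ℕ) : ℕ :=
  (π.filter fun A => m ∈ A).card

/-- `m` is singly-covered by `π`: it lies in exactly one block. -/
def SinglyCovered (π : Finset (Finset ℕ)) (m : ℕ) : Prop := coverCount π m = 1

/-- `m` is doubly-covered by `π`: it lies in exactly two blocks. -/
def DoublyCovered (π : Finset (Finset ℕ)) (m : ℕ) : Prop := coverCount π m = 2

/-- The partition `π̂` generated by the blocks of `π`: its blocks are the connected
components of the ground set under the relation of lying in a common block of `π`. -/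
noncomputable def genPart (π : Finset (Finset ℕ)) : Finset (Finset ℕ) :=
  (π.sup id).image fun m =>
    (π.sup id).filter fun x =>
      Relation.EqvGen (fun a b => ∃ A ∈ π, a ∈ A ∧ b ∈ A) m x

/-- The unlinking `π̌` of a linked partition `π`. -/
noncomputable def unlink (π : Finset (Finset ℕ)) : Finset (Finset ℕ) :=
  π.image fun A => if SinglyCovered π (fmin A) then A else A.erase (fmin A)

/-- The block of `α` containing `m` (empty if there is none). -/
noncomputable def blockOf (α : Finset (Finset ℕ)) (m : ℕ) : Finset ℕ :=
  (α.filter fun V => m ∈ V).sup id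

/-- The successor of `m` in the cycle on the block `V` (elements in increasing order). -/
noncomputable def nextInBlock (V : Finset ℕ) (m : ℕ) : ℕ :=
  if m = fmax V then fmin V else fmin (V.filter fun x => m < x)

/-- The predecessor of `m` in the cycle on the block `V`. -/
noncomputable def prevInBlock (V : Finset ℕ) (m : ℕ) : ℕ :=
  if m = fmin V then fmax V else fmax (V.filter fun x => x < m)

/-- The permutation `P_α` associated to a partition `α`, as a function: each block
`{i₁ < i₂ < ⋯ < iₘ}` becomes the cycle `i₁ ↦ i₂ ↦ ⋯ ↦ iₘ ↦ i₁`. -/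
noncomputable def permOf (α : Finset (Finset ℕ)) (m : ℕ) : ℕ :=
  if m ∈ blockOf α m then nextInBlock (blockOf α m) m else m

/-- The inverse permutation `P_α⁻¹`, as a function. -/
noncomputable def permOfInv (α : Finset (Finset ℕ)) (m : ℕ) : ℕ :=
  if m ∈ blockOf α m then prevInBlock (blockOf α m) m else m

/-- The action `τ·α` of a map `τ` on a partition `α = {V₁,…,V_p}`, giving
`{τ(V₁),…,τ(V_p)}`. -/
def mapPart (τ : ℕ → ℕ) (α : Finset (Finset ℕ)) : Finset (Finset ℕ) :=
  α.image fun V => V.image τ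

/-- The cycled unlinking `π° := P_{π̂}⁻¹ · π̌`. -/
noncomputable def cycUnlink (π : Finset (Finset ℕ)) : Finset (Finset ℕ) :=
  mapPart (permOfInv (genPart π)) (unlink π)

/-- `NC(n)` as a finset. -/
noncomputable def NCF (n : ℕ) : Finset (Finset (Finset ℕ)) :=
  ((Finset.Icc 1 n).powerset.powerset).filter (IsNCPartition n)

/-- `NCL(n)` as a finset. -/
noncomputable def NCLF (n : ℕ) : Finset (Finset (Finset ℕ)) :=
  ((Finset.Icc 1 n).powerset.powerset).filter (IsNCL n)

/-- The restriction `π|_E`: the blocks of `π` contained in `E`. -/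
def restrictL (π : Finset (Finset ℕ)) (E : Finset ℕ) : Finset (Finset ℕ) :=
  π.filter fun A => A ⊆ E

/-- The partition `β₀` obtained from `β` by leaving blocks of size `≤ 2` intact and
breaking each block `W` with `|W| ≥ 3` into the doubleton `{min W, max W}` together
with `|W| - 2` singletons. -/
noncomputable def breakBlocks (β : Finset (Finset ℕ)) : Finset (Finset ℕ) :=
  β.biUnion fun W =>
    if W.card ≤ 2 then {W}
    else insert {fmin W, fmax W} ((W \ {fmin W, fmax W}).image fun x => ({x} : Finset ℕ))

/-!
For `α ≪ β`, every outer block of `α` is `β`-special, and `β` is recovered from the set `S` of its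
special blocks: the block of `β` through a point `m` consists of the points whose innermost
spanning block in `S` (the `A ∈ S` with `min A ≤ m ≤ max A` and largest minimum) is the same as
that of `m`. Conversely, every `S ⊆ α` containing the outer blocks arises in this way, and its
special blocks are exactly `S`. The sum is thus over `O ⊆ S ⊆ α`, `O` the outer blocks, of
`∏_{U ∈ S} t_{|U|-1} ∏_{V ∉ S} t_{|V|}`, which factors as the right-hand side.
-/

lemma fmin_mem {A : Finset ℕ} (h : A.Nonempty) : fmin A ∈ A := by
  exact_mod_cast Nat.sInf_mem (s := (A : Set ℕ)) (by exact_mod_cast h)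

lemma fmin_le {A : Finset ℕ} {a : ℕ} (h : a ∈ A) : fmin A ≤ a :=
  Nat.sInf_le (by exact_mod_cast h)

lemma fmax_mem {A : Finset ℕ} (h : A.Nonempty) : fmax A ∈ A := by
  exact_mod_cast Nat.sSup_mem (s := (A : Set ℕ)) (by exact_mod_cast h) A.finite_toSet.bddAbove

lemma le_fmax {A : Finset ℕ} {a : ℕ} (h : a ∈ A) : a ≤ fmax A :=
  le_csSup A.finite_toSet.bddAbove (by exact_mod_cast h)

theorem Finset.prod_mul_prod_add_eq_sum_supersets {ι R : Type*} [CommSemiring R] [DecidableEq ι]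
    {s t : Finset ι} (hts : t ⊆ s) (f g : ι → R) :
    (∏ i ∈ t, f i) * ∏ i ∈ s \ t, (f i + g i)
      = ∑ u ∈ s.powerset.filter (t ⊆ ·), (∏ i ∈ u, f i) * ∏ i ∈ s \ u, g i := by
  rw [Finset.prod_add, Finset.mul_sum]
  have disjoint_of_mem {v : Finset ι} (hv : v ∈ (s \ t).powerset) : Disjoint t v :=
    Finset.disjoint_sdiff.mono_right (Finset.mem_powerset.1 hv)
  refine Finset.sum_nbij' (t ∪ ·) (· \ t) (fun v hv => ?_) (fun u hu => ?_)
    (fun v hv => Finset.union_sdiff_cancel_left (disjoint_of_mem hv))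
    (fun u hu => Finset.union_sdiff_of_subset (Finset.mem_filter.1 hu).2) (fun v hv => ?_)
  · rw [Finset.mem_powerset] at hv
    exact Finset.mem_filter.2 ⟨Finset.mem_powerset.2 (Finset.union_subset hts
      (hv.trans Finset.sdiff_subset)), Finset.subset_union_left⟩
  · exact Finset.mem_powerset.2
      (Finset.sdiff_subset_sdiff (Finset.mem_powerset.1 (Finset.mem_filter.1 hu).1) le_rfl)
  · rw [Finset.prod_union (disjoint_of_mem hv), sdiff_sdiff_left, Finset.sup_eq_union, mul_assoc]

section Partition

variable {F : Finset ℕ} {α : Finset (Finset ℕ)}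

lemma IsPartitionOfSet.eq_of_mem (hα : IsPartitionOfSet F α) {V W : Finset ℕ} (hV : V ∈ α)
    (hW : W ∈ α) {x : ℕ} (hxV : x ∈ V) (hxW : x ∈ W) : V = W := by
  by_contra hVW
  exact Finset.notMem_empty x (hα.2.2.2 V hV W hW hVW ▸ Finset.mem_inter.2 ⟨hxV, hxW⟩)

lemma IsPartitionOfSet.eq_of_fmin_eq (hα : IsPartitionOfSet F α) {V W : Finset ℕ} (hV : V ∈ α)
    (hW : W ∈ α) (h : fmin V = fmin W) : V = W :=
  hα.eq_of_mem hV hW (fmin_mem (hα.1 V hV)) (h ▸ fmin_mem (hα.1 W hW))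

lemma IsPartitionOfSet.eq_of_fmax_eq (hα : IsPartitionOfSet F α) {V W : Finset ℕ} (hV : V ∈ α)
    (hW : W ∈ α) (h : fmax V = fmax W) : V = W :=
  hα.eq_of_mem hV hW (fmax_mem (hα.1 V hV)) (h ▸ fmax_mem (hα.1 W hW))

lemma nested_of_mem_span (hα : IsPartitionOfSet F α) (hnc : ¬ IsCrossing α) {V W : Finset ℕ}
    (hV : V ∈ α) (hW : W ∈ α) (hVW : V ≠ W) {m : ℕ} (hm : m ∈ V) (h₁ : fmin W ≤ m)
    (h₂ : m ≤ fmax W) : fmin W < fmin V ∧ fmax V < fmax W := by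
  have hWne := hα.1 W hW
  have hVne := hα.1 V hV
  have hmW : m ∉ W := fun h => hVW (hα.eq_of_mem hV hW hm h)
  have h₁' : fmin W < m := h₁.lt_of_ne fun h => hmW (h ▸ fmin_mem hWne)
  have h₂' : m < fmax W := h₂.lt_of_ne fun h => hmW (h ▸ fmax_mem hWne)
  constructor
  · refine lt_of_le_of_ne (not_lt.1 fun h => hnc ?_) fun h => hVW (hα.eq_of_fmin_eq hW hV h).symm
    exact ⟨V, hV, W, hW, hVW, _, fmin_mem hVne, _, fmin_mem hWne, m, hm, _, fmax_mem hWne,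
      h, h₁', h₂'⟩
  · refine lt_of_le_of_ne (not_lt.1 fun h => hnc ?_) fun h => hVW (hα.eq_of_fmax_eq hV hW h)
    exact ⟨W, hW, V, hV, hVW.symm, _, fmin_mem hWne, m, hm, _, fmax_mem hWne, _, fmax_mem hVne,
      h₁', h₂', h⟩

lemma exists_outerBlock_spanning (hα : IsPartitionOfSet F α) {m : ℕ} (hm : m ∈ F) :
    ∃ A ∈ α, OuterBlock α A ∧ fmin A ≤ m ∧ m ≤ fmax A := by
  obtain ⟨V, hV, hmV⟩ := hα.2.2.1 m hm
  obtain ⟨A, hA, hmin⟩ := (α.filter fun B => fmin B ≤ m ∧ m ≤ fmax B).exists_min_image fmin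
    ⟨V, Finset.mem_filter.2 ⟨hV, fmin_le hmV, le_fmax hmV⟩⟩
  obtain ⟨hAα, hAm⟩ := Finset.mem_filter.1 hA
  refine ⟨A, hAα, fun B hB ⟨h₁, h₂⟩ => ?_, hAm⟩
  exact (hmin B (Finset.mem_filter.2 ⟨hB, h₁.le.trans hAm.1, hAm.2.trans h₂.le⟩)).not_gt h₁

end Partition

noncomputable def innermostRegion (F : Finset ℕ) (S : Finset (Finset ℕ)) (A : Finset ℕ) :
    Finset ℕ :=
  F.filter fun m =>
    (fmin A ≤ m ∧ m ≤ fmax A) ∧ ∀ B ∈ S, fmin B ≤ m → m ≤ fmax B → fmin B ≤ fmin A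

noncomputable def regionPartition (F : Finset ℕ) (S : Finset (Finset ℕ)) :
    Finset (Finset ℕ) :=
  S.image (innermostRegion F S)

section Region

variable {F : Finset ℕ} {α S : Finset (Finset ℕ)}

lemma mem_innermostRegion {A : Finset ℕ} {m : ℕ} :
    m ∈ innermostRegion F S A ↔ m ∈ F ∧ (fmin A ≤ m ∧ m ≤ fmax A) ∧
      ∀ B ∈ S, fmin B ≤ m → m ≤ fmax B → fmin B ≤ fmin A :=
  Finset.mem_filter

lemma subset_innermostRegion (hα : IsPartitionOfSet F α) (hnc : ¬ IsCrossing α) (hS : S ⊆ α)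
    {A : Finset ℕ} (hA : A ∈ S) : A ⊆ innermostRegion F S A := by
  intro m hm
  refine mem_innermostRegion.2 ⟨hα.2.1 A (hS hA) hm, ⟨fmin_le hm, le_fmax hm⟩, fun B hB h₁ h₂ => ?_⟩
  obtain rfl | hBA := eq_or_ne B A
  · exact le_rfl
  · exact (nested_of_mem_span hα hnc (hS hA) (hS hB) hBA.symm hm h₁ h₂).1.le

lemma eq_of_mem_innermostRegion (hα : IsPartitionOfSet F α) (hS : S ⊆ α) {A B : Finset ℕ}
    (hA : A ∈ S) (hB : B ∈ S) {m : ℕ} (hmA : m ∈ innermostRegion F S A)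
    (hmB : m ∈ innermostRegion F S B) : A = B := by
  obtain ⟨-, hspanA, hinA⟩ := mem_innermostRegion.1 hmA
  obtain ⟨-, hspanB, hinB⟩ := mem_innermostRegion.1 hmB
  exact hα.eq_of_fmin_eq (hS hA) (hS hB)
    ((hinB A hA hspanA.1 hspanA.2).antisymm (hinA B hB hspanB.1 hspanB.2))

lemma fmin_innermostRegion (hα : IsPartitionOfSet F α) (hnc : ¬ IsCrossing α) (hS : S ⊆ α)
    {A : Finset ℕ} (hA : A ∈ S) : fmin (innermostRegion F S A) = fmin A := by
  have hne := hα.1 A (hS hA)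
  have hsub := subset_innermostRegion hα hnc hS hA
  exact (fmin_le (hsub (fmin_mem hne))).antisymm
    (mem_innermostRegion.1 (fmin_mem (hne.mono hsub))).2.1.1

lemma fmax_innermostRegion (hα : IsPartitionOfSet F α) (hnc : ¬ IsCrossing α) (hS : S ⊆ α)
    {A : Finset ℕ} (hA : A ∈ S) : fmax (innermostRegion F S A) = fmax A := by
  have hne := hα.1 A (hS hA)
  have hsub := subset_innermostRegion hα hnc hS hA
  exact (mem_innermostRegion.1 (fmax_mem (hne.mono hsub))).2.1.2.antisymm
    (le_fmax (hsub (fmax_mem hne)))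

lemma exists_mem_innermostRegion (hα : IsPartitionOfSet F α)
    (hout : ∀ V ∈ α, OuterBlock α V → V ∈ S) {m : ℕ} (hm : m ∈ F) :
    ∃ A ∈ S, m ∈ innermostRegion F S A := by
  obtain ⟨A₀, hA₀, hA₀out, hA₀m⟩ := exists_outerBlock_spanning hα hm
  obtain ⟨A, hA, hmax⟩ := (S.filter fun B => fmin B ≤ m ∧ m ≤ fmax B).exists_max_image fmin
    ⟨A₀, Finset.mem_filter.2 ⟨hout A₀ hA₀ hA₀out, hA₀m⟩⟩
  obtain ⟨hAS, hAm⟩ := Finset.mem_filter.1 hA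
  exact ⟨A, hAS, mem_innermostRegion.2 ⟨hm, hAm, fun B hB h₁ h₂ =>
    hmax B (Finset.mem_filter.2 ⟨hB, h₁, h₂⟩)⟩⟩

lemma isPartitionOfSet_regionPartition (hα : IsPartitionOfSet F α) (hnc : ¬ IsCrossing α)
    (hS : S ⊆ α) (hout : ∀ V ∈ α, OuterBlock α V → V ∈ S) :
    IsPartitionOfSet F (regionPartition F S) := by
  refine ⟨?_, ?_, fun m hm => ?_, ?_⟩
  · intro W hW
    obtain ⟨A, hA, rfl⟩ := Finset.mem_image.1 hW
    exact (hα.1 A (hS hA)).mono (subset_innermostRegion hα hnc hS hA)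
  · intro W hW
    obtain ⟨A, -, rfl⟩ := Finset.mem_image.1 hW
    exact Finset.filter_subset _ _
  · obtain ⟨A, hA, hmA⟩ := exists_mem_innermostRegion hα hout hm
    exact ⟨_, Finset.mem_image_of_mem _ hA, hmA⟩
  · intro W hW W' hW' hne
    obtain ⟨A, hA, rfl⟩ := Finset.mem_image.1 hW
    obtain ⟨B, hB, rfl⟩ := Finset.mem_image.1 hW'
    refine Finset.eq_empty_iff_forall_notMem.2 fun m hm => hne ?_
    rw [eq_of_mem_innermostRegion hα hS hA hB (Finset.mem_inter.1 hm).1 (Finset.mem_inter.1 hm).2]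

lemma not_isCrossing_regionPartition (hα : IsPartitionOfSet F α) (hS : S ⊆ α) :
    ¬ IsCrossing (regionPartition F S) := by
  rintro ⟨W, hW, W', hW', hne, a, ha, b, hb, c, hc, d, hd, hab, hbc, hcd⟩
  obtain ⟨A, hA, rfl⟩ := Finset.mem_image.1 hW
  obtain ⟨B, hB, rfl⟩ := Finset.mem_image.1 hW'
  obtain ⟨-, hspana, -⟩ := mem_innermostRegion.1 ha
  obtain ⟨-, hspanb, hinb⟩ := mem_innermostRegion.1 hb
  obtain ⟨-, hspanc, hinc⟩ := mem_innermostRegion.1 hc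
  obtain ⟨-, hspand, -⟩ := mem_innermostRegion.1 hd
  have hAB : fmin A ≤ fmin B := hinb A hA (hspana.1.trans hab.le) (hbc.le.trans hspanc.2)
  have hBA : fmin B ≤ fmin A := hinc B hB (hspanb.1.trans hbc.le) (hcd.le.trans hspand.2)
  exact hne (by rw [hα.eq_of_fmin_eq (hS hA) (hS hB) (hAB.antisymm hBA)])

lemma spans_of_mem_of_spans (hα : IsPartitionOfSet F α) (hnc : ¬ IsCrossing α)
    {V B : Finset ℕ} (hV : V ∈ α) (hB : B ∈ α) {m m' : ℕ} (hm : m ∈ V) (hm' : m' ∈ V)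
    (h₁ : fmin B ≤ m) (h₂ : m ≤ fmax B) : fmin B ≤ m' ∧ m' ≤ fmax B := by
  obtain rfl | hVB := eq_or_ne V B
  · exact ⟨fmin_le hm', le_fmax hm'⟩
  · obtain ⟨hlt₁, hlt₂⟩ := nested_of_mem_span hα hnc hV hB hVB hm h₁ h₂
    exact ⟨hlt₁.le.trans (fmin_le hm'), (le_fmax hm').trans hlt₂.le⟩

lemma mem_innermostRegion_of_mem_block (hα : IsPartitionOfSet F α) (hnc : ¬ IsCrossing α)
    (hS : S ⊆ α) {A V : Finset ℕ} (hA : A ∈ S) (hV : V ∈ α) {m m' : ℕ} (hm : m ∈ V)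
    (hm' : m' ∈ V) (hmA : m ∈ innermostRegion F S A) : m' ∈ innermostRegion F S A := by
  obtain ⟨-, hspan, hin⟩ := mem_innermostRegion.1 hmA
  refine mem_innermostRegion.2 ⟨hα.2.1 V hV hm', ?_, fun B hB h₁ h₂ => ?_⟩
  · exact spans_of_mem_of_spans hα hnc hV (hS hA) hm hm' hspan.1 hspan.2
  · obtain ⟨h₁', h₂'⟩ := spans_of_mem_of_spans hα hnc hV (hS hB) hm' hm h₁ h₂
    exact hin B hB h₁' h₂'

lemma LL_regionPartition (hα : IsPartitionOfSet F α) (hnc : ¬ IsCrossing α) (hS : S ⊆ α)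
    (hout : ∀ V ∈ α, OuterBlock α V → V ∈ S) : LL α (regionPartition F S) := by
  refine ⟨fun V hV => ?_, fun W hW => ?_⟩
  · have hmin := fmin_mem (hα.1 V hV)
    obtain ⟨A, hA, hA_min⟩ := exists_mem_innermostRegion hα hout (hα.2.1 V hV hmin)
    exact ⟨_, Finset.mem_image_of_mem _ hA, fun m hm =>
      mem_innermostRegion_of_mem_block hα hnc hS hA hV hmin hm hA_min⟩
  · obtain ⟨A, hA, rfl⟩ := Finset.mem_image.1 hW
    have hmin := fmin_innermostRegion hα hnc hS hA
    have hmax := fmax_innermostRegion hα hnc hS hA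
    have hne := hα.1 A (hS hA)
    exact ⟨A, hS hA, hmin ▸ fmin_mem hne, hmax ▸ fmax_mem hne⟩

lemma specialBlock_regionPartition_iff (hα : IsPartitionOfSet F α) (hnc : ¬ IsCrossing α)
    (hS : S ⊆ α) {V : Finset ℕ} (hV : V ∈ α) : SpecialBlock (regionPartition F S) V ↔ V ∈ S := by
  constructor
  · rintro ⟨W, hW, hmin, -⟩
    obtain ⟨A, hA, rfl⟩ := Finset.mem_image.1 hW
    rwa [hα.eq_of_fmin_eq hV (hS hA) (hmin.trans (fmin_innermostRegion hα hnc hS hA))]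
  · intro hVS
    exact ⟨_, Finset.mem_image_of_mem _ hVS, (fmin_innermostRegion hα hnc hS hVS).symm,
      (fmax_innermostRegion hα hnc hS hVS).symm⟩

end Region

section SpecialBlocks

variable {F : Finset ℕ} {α β : Finset (Finset ℕ)}

lemma OuterBlock.specialBlock (hα : IsPartitionOfSet F α) (hLL : LL α β) {U : Finset ℕ}
    (hU : U ∈ α) (hout : OuterBlock α U) : SpecialBlock β U := by
  have hne := hα.1 U hU
  obtain ⟨W, hW, hUW⟩ := hLL.1 U hU
  obtain ⟨V, hV, hminV, hmaxV⟩ := hLL.2 W hW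
  have h₁ : fmin W ≤ fmin U := fmin_le (hUW (fmin_mem hne))
  have h₂ : fmax U ≤ fmax W := le_fmax (hUW (fmax_mem hne))
  obtain rfl | hVU := eq_or_ne V U
  · exact ⟨W, hW, (fmin_le hminV).antisymm h₁, h₂.antisymm (le_fmax hmaxV)⟩
  · refine (hout V hV ⟨?_, ?_⟩).elim
    · exact ((fmin_le hminV).trans h₁).lt_of_ne fun h => hVU (hα.eq_of_fmin_eq hV hU h)
    · exact (h₂.trans (le_fmax hmaxV)).lt_of_ne fun h => hVU (hα.eq_of_fmax_eq hV hU h.symm)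

lemma exists_mem_fmin_eq_fmax_eq (hβ : IsPartitionOfSet F β) (hLL : LL α β) {W : Finset ℕ}
    (hW : W ∈ β) : ∃ V ∈ α, fmin V = fmin W ∧ fmax V = fmax W := by
  obtain ⟨V, hV, hminV, hmaxV⟩ := hLL.2 W hW
  obtain ⟨W', hW', hVW'⟩ := hLL.1 V hV
  obtain rfl := hβ.eq_of_mem hW' hW (hVW' hminV) (fmin_mem (hβ.1 W hW))
  exact ⟨V, hV, (fmin_le hminV).antisymm (fmin_le (hVW' (fmin_mem ⟨_, hminV⟩))),
    (le_fmax (hVW' (fmax_mem ⟨_, hminV⟩))).antisymm (le_fmax hmaxV)⟩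

lemma subset_innermostRegion_of_fmin_eq_fmax_eq (hβ : IsPartitionOfSet F β)
    (hβnc : ¬ IsCrossing β) {W V : Finset ℕ} (hW : W ∈ β) (hmin : fmin V = fmin W)
    (hmax : fmax V = fmax W) : W ⊆ innermostRegion F (α.filter (SpecialBlock β)) V := by
  intro m hm
  refine mem_innermostRegion.2 ⟨hβ.2.1 W hW hm, ⟨hmin ▸ fmin_le hm, hmax ▸ le_fmax hm⟩, ?_⟩
  intro B hB h₁ h₂
  obtain ⟨-, W', hW', hminB, hmaxB⟩ := Finset.mem_filter.1 hB
  rw [hminB, hmin]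
  obtain rfl | hWW' := eq_or_ne W W'
  · exact le_rfl
  · exact (nested_of_mem_span hβ hβnc hW hW' hWW' hm (hminB ▸ h₁) (hmaxB ▸ h₂)).1.le

lemma eq_innermostRegion_of_fmin_eq_fmax_eq (hα : IsPartitionOfSet F α)
    (hβ : IsPartitionOfSet F β) (hβnc : ¬ IsCrossing β) (hLL : LL α β) {W V : Finset ℕ}
    (hW : W ∈ β) (hV : V ∈ α) (hmin : fmin V = fmin W) (hmax : fmax V = fmax W) :
    W = innermostRegion F (α.filter (SpecialBlock β)) V := by
  refine (subset_innermostRegion_of_fmin_eq_fmax_eq hβ hβnc hW hmin hmax).antisymm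
    fun m hm => ?_
  obtain ⟨W', hW', hmW'⟩ := hβ.2.2.1 m (mem_innermostRegion.1 hm).1
  obtain ⟨V', hV', hmin', hmax'⟩ := exists_mem_fmin_eq_fmax_eq hβ hLL hW'
  have hV'V : V' = V := eq_of_mem_innermostRegion hα (Finset.filter_subset _ α)
    (Finset.mem_filter.2 ⟨hV', W', hW', hmin', hmax'⟩) (Finset.mem_filter.2 ⟨hV, W, hW, hmin, hmax⟩)
    (subset_innermostRegion_of_fmin_eq_fmax_eq hβ hβnc hW' hmin' hmax' hmW') hm
  rwa [← hβ.eq_of_fmin_eq hW' hW (by rw [← hmin', hV'V, hmin])]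

lemma eq_regionPartition_filter_specialBlock (hα : IsPartitionOfSet F α)
    (hβ : IsPartitionOfSet F β) (hβnc : ¬ IsCrossing β) (hLL : LL α β) :
    β = regionPartition F (α.filter (SpecialBlock β)) := by
  ext W
  constructor
  · intro hW
    obtain ⟨V, hV, hmin, hmax⟩ := exists_mem_fmin_eq_fmax_eq hβ hLL hW
    rw [eq_innermostRegion_of_fmin_eq_fmax_eq hα hβ hβnc hLL hW hV hmin hmax]
    exact Finset.mem_image_of_mem _ (Finset.mem_filter.2 ⟨hV, W, hW, hmin, hmax⟩)
  · intro hW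
    obtain ⟨V, hV, rfl⟩ := Finset.mem_image.1 hW
    obtain ⟨hVα, W, hW, hmin, hmax⟩ := Finset.mem_filter.1 hV
    rwa [← eq_innermostRegion_of_fmin_eq_fmax_eq hα hβ hβnc hLL hW hVα hmin hmax]

end SpecialBlocks

theorem sum_filter_LL_eq_sum_supersets_outer {M : Type*} [AddCommMonoid M] {n : ℕ}
    {α : Finset (Finset ℕ)} (hα : IsNCPartition n α) (f : Finset (Finset ℕ) → M) :
    ∑ β ∈ (NCF n).filter (fun β => LL α β), f (α.filter fun U => SpecialBlock β U)
      = ∑ S ∈ α.powerset.filter (α.filter (fun U => OuterBlock α U) ⊆ ·), f S := by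
  have hS_mem {S : Finset (Finset ℕ)}
      (hS : S ∈ α.powerset.filter (α.filter (fun U => OuterBlock α U) ⊆ ·)) :
      S ⊆ α ∧ ∀ V ∈ α, OuterBlock α V → V ∈ S := by
    obtain ⟨hSα, hout⟩ := Finset.mem_filter.1 hS
    exact ⟨Finset.mem_powerset.1 hSα, fun V hV hV_out => hout (Finset.mem_filter.2 ⟨hV, hV_out⟩)⟩
  have hβ_mem {β : Finset (Finset ℕ)} (hβ : β ∈ (NCF n).filter (fun β => LL α β)) :
      IsNCPartition n β ∧ LL α β :=
    ⟨(Finset.mem_filter.1 (Finset.mem_filter.1 hβ).1).2, (Finset.mem_filter.1 hβ).2⟩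
  refine Finset.sum_nbij' (fun β => α.filter fun U => SpecialBlock β U)
    (regionPartition (Finset.Icc 1 n)) (fun β hβ => ?_) (fun S hS => ?_) (fun β hβ => ?_)
    (fun S hS => ?_) (fun _ _ => rfl)
  · refine Finset.mem_filter.2 ⟨Finset.mem_powerset.2 (Finset.filter_subset _ _), fun U hU => ?_⟩
    obtain ⟨hUα, hU_out⟩ := Finset.mem_filter.1 hU
    exact Finset.mem_filter.2 ⟨hUα, hU_out.specialBlock hα.1 (hβ_mem hβ).2 hUα⟩
  · obtain ⟨hSα, hout⟩ := hS_mem hS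
    have hpart := isPartitionOfSet_regionPartition hα.1 hα.2 hSα hout
    refine Finset.mem_filter.2 ⟨Finset.mem_filter.2 ⟨Finset.mem_powerset.2 fun W hW =>
      Finset.mem_powerset.2 (hpart.2.1 W hW), hpart, not_isCrossing_regionPartition hα.1 hSα⟩,
      LL_regionPartition hα.1 hα.2 hSα hout⟩
  · obtain ⟨⟨hβ, hβnc⟩, hLL⟩ := hβ_mem hβ
    exact (eq_regionPartition_filter_specialBlock hα.1 hβ hβnc hLL).symm
  · have hSα := (hS_mem hS).1
    ext V
    rw [Finset.mem_filter]
    exact ⟨fun ⟨hV, hV_sp⟩ => (specialBlock_regionPartition_iff hα.1 hα.2 hSα hV).1 hV_sp,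
      fun hVS => ⟨hSα hVS, (specialBlock_regionPartition_iff hα.1 hα.2 hSα (hSα hVS)).2 hVS⟩⟩

/-- Let `(t_k)` be a sequence in a commutative ring and `α ∈ NC(n)`.
Then `Σ_{β ∈ NC(n), β ≫ α}
        (∏_{U β-special block of α} t_{|U|-1}) · (∏_{V non-β-special block of α} t_{|V|})
  = (∏_{U outer block of α} t_{|U|-1}) · (∏_{V inner block of α} (t_{|V|-1} + t_{|V|}))`. -/
theorem stmt18 {R : Type*} [CommRing R] (t : ℕ → R)
    (n : ℕ) (α : Finset (Finset ℕ)) (hα : IsNCPartition n α) :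
    ∑ β ∈ (NCF n).filter fun β => LL α β,
        (∏ U ∈ α.filter fun U => SpecialBlock β U, t (U.card - 1))
          * ∏ V ∈ α.filter fun V => ¬ SpecialBlock β V, t V.card
      = (∏ U ∈ α.filter fun U => OuterBlock α U, t (U.card - 1))
          * ∏ V ∈ α.filter fun V => ¬ OuterBlock α V, (t (V.card - 1) + t V.card) := by
  simp only [Finset.filter_not]
  rw [sum_filter_LL_eq_sum_supersets_outer hα
      fun S => (∏ U ∈ S, t (U.card - 1)) * ∏ V ∈ α \ S, t V.card,
    Finset.prod_mul_prod_add_eq_sum_supersets (Finset.filter_subset _ α)]
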